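/- If ν ∈ 𝒫(ℝ) is doubling with constant C on its support and supp ν is a uniformly perfect set with constant K, then ν is an (N,γ)-uniformly perfect measure for some N > 1 and γ > 0 depending only on K and C; explicitly, ν is (2(2K+1)+1, γ)-uniformly perfect with 2^γ = 1 + C^{−M}, where M = ⌈log₂((2K+1)+1)⌉. -/

import Mathlib

open MeasureTheory Filter Set Metric

/-- Topological support of a measure on ℝ. -/
noncomputable def mSupp (μ : Measure ℝ) : Set ℝ := {x | ∀ r > 0, 0 < μ (ball x r)}

/-- A compactly supported Borel probability measure on ℝ (an element of 𝒫(ℝ)). -/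
def IsCptProb (μ : Measure ℝ) : Prop :=
  IsProbabilityMeasure μ ∧ ∃ K : Set ℝ, IsCompact K ∧ μ Kᶜ = 0

/-- ν is (N,γ)-uniformly perfect: ν(B(x,Nr)) ≥ 2^γ ν(B(x,r)) whenever
x ∈ ℝ, r > 0 and supp ν ⊄ B(x,Nr). -/
def UnifPerfMeas (ν : Measure ℝ) (N γ : ℝ) : Prop :=
  ∀ x : ℝ, ∀ r > 0, ¬ mSupp ν ⊆ ball x (N * r) →
    ENNReal.ofReal (2 ^ γ) * ν (ball x r) ≤ ν (ball x (N * r))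

/-- A ⊆ ℝ is uniformly perfect with constant K: whenever x ∈ A, r > 0 and
A ⊄ B(x,Kr), then A ∩ (B(x,Kr) \ B(x,r)) ≠ ∅. -/
def UnifPerfSet (A : Set ℝ) (K : ℝ) : Prop :=
  ∀ x ∈ A, ∀ r > 0, ¬ A ⊆ ball x (K * r) → (A ∩ (ball x (K * r) \ ball x r)).Nonempty

/-- ν is doubling with constant C on its support: ν(B(x,2r)) ≤ C ν(B(x,r)) for all
x ∈ supp ν and r > 0. -/
def DoublingOn (ν : Measure ℝ) (C : ℝ) : Prop :=
  ∀ x ∈ mSupp ν, ∀ r > 0, ν (ball x (2 * r)) ≤ ENNReal.ofReal C * ν (ball x r)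

/-!
Given a ball `B(x, r)` of positive mass, pick a support point `y` in it. Uniform perfectness at
`y` yields a support point `z` whose distance `D` to `x` is comparable to `r` and exceeds it by a
definite factor, so the ball `B(z, D - r)` is disjoint from `B(x, r)`, lies in `B(x, N r)`, and
`2 ^ M` times it covers `B(x, r)`. Doubling `M` times gives
`ν(B(z, D - r)) ≥ C ^ (-M) ν(B(x, r))`, hence `ν(B(x, N r)) ≥ (1 + C ^ (-M)) ν(B(x, r))`.
-/

lemma exists_mem_mSupp_of_measure_ne_zero {ν : Measure ℝ} {s : Set ℝ} (h : ν s ≠ 0) :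
    ∃ y ∈ s, y ∈ mSupp ν := by
  by_contra! hs
  refine h (measure_null_of_locally_null s fun a ha => ?_)
  obtain ⟨r, hr, h0⟩ : ∃ r > 0, ν (ball a r) ≤ 0 := by
    simpa [mSupp] using hs a ha
  exact ⟨ball a r, mem_nhdsWithin_of_mem_nhds (ball_mem_nhds a hr), nonpos_iff_eq_zero.1 h0⟩

lemma mSupp_nonempty {ν : Measure ℝ} [NeZero ν] : (mSupp ν).Nonempty := by
  obtain ⟨y, -, hy⟩ :=
    exists_mem_mSupp_of_measure_ne_zero (Measure.measure_univ_ne_zero.2 (NeZero.ne ν))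
  exact ⟨y, hy⟩

lemma le_two_pow_natCeil_logb {a : ℝ} (ha : 0 < a) : a ≤ 2 ^ ⌈Real.logb 2 a⌉₊ :=
  calc a = 2 ^ Real.logb 2 a := (Real.rpow_logb two_pos (by norm_num) ha).symm
    _ ≤ 2 ^ (⌈Real.logb 2 a⌉₊ : ℝ) :=
        Real.rpow_le_rpow_of_exponent_le one_le_two (Nat.le_ceil _)
    _ = 2 ^ ⌈Real.logb 2 a⌉₊ := Real.rpow_natCast _ _

lemma UnifPerfSet.exists_mem_far_from_ball {A : Set ℝ} {K : ℝ} (hA : UnifPerfSet A K)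
    (hK : 1 < K) {x y r : ℝ} (hy : y ∈ A) (hyx : dist y x < r)
    (hfar : ¬ A ⊆ ball x ((2 * (2 * K + 1) + 1) * r)) :
    ∃ z ∈ A, r < dist z x ∧ r + dist z x ≤ (2 * K + 1 + 1) * (dist z x - r) ∧
      (dist z x - r) + dist z x ≤ (2 * (2 * K + 1) + 1) * r := by
  have hr : 0 < r := dist_nonneg.trans_lt hyx
  have hKs : K * ((2 * K + 1) / K * r) = (2 * K + 1) * r := by field_simp
  have hfar' : ¬ A ⊆ ball y (K * ((2 * K + 1) / K * r)) := by
    refine fun hsub => hfar fun p hp => mem_ball.2 ?_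
    have hpy : dist p y < (2 * K + 1) * r := hKs ▸ mem_ball.1 (hsub hp)
    nlinarith [dist_triangle p y x]
  obtain ⟨z, hz, hzK, hzs⟩ := hA y hy _ (by positivity) hfar'
  have hzy_lt : dist z y < (2 * K + 1) * r := hKs ▸ mem_ball.1 hzK
  have hzy_ge : (2 * K + 1) / K * r ≤ dist z y := not_lt.1 fun h => hzs (mem_ball.2 h)
  have hD_lt : dist z x < (2 * K + 2) * r := by linarith [dist_triangle z y x]
  have hKD : (K + 1) * r < K * dist z x := by
    have := mul_le_mul_of_nonneg_left hzy_ge (by linarith : (0 : ℝ) ≤ K)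
    rw [hKs] at this
    nlinarith [dist_triangle z x y, dist_comm x y]
  exact ⟨z, hz, by nlinarith, by nlinarith, by nlinarith⟩

namespace DoublingOn

variable {ν : Measure ℝ} {C : ℝ}

lemma pos (hd : DoublingOn ν C) (hne : (mSupp ν).Nonempty) : 0 < C := by
  obtain ⟨w, hw⟩ := hne
  by_contra! hC
  have h2 : ν (ball w (2 * 1)) = 0 := by
    simpa [ENNReal.ofReal_eq_zero.2 hC] using hd w hw 1 one_pos
  exact (hw 1 one_pos).ne' (measure_mono_null (ball_subset_ball (by norm_num)) h2)

lemma measure_ball_two_pow_mul_le (hd : DoublingOn ν C) {z ρ : ℝ} (hz : z ∈ mSupp ν)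
    (hρ : 0 < ρ) (m : ℕ) :
    ν (ball z (2 ^ m * ρ)) ≤ ENNReal.ofReal C ^ m * ν (ball z ρ) := by
  induction m with
  | zero => simp
  | succ n ih =>
    calc ν (ball z (2 ^ (n + 1) * ρ)) = ν (ball z (2 * (2 ^ n * ρ))) := by ring_nf
      _ ≤ ENNReal.ofReal C * ν (ball z (2 ^ n * ρ)) := hd z hz _ (by positivity)
      _ ≤ ENNReal.ofReal C * (ENNReal.ofReal C ^ n * ν (ball z ρ)) := by gcongr
      _ = ENNReal.ofReal C ^ (n + 1) * ν (ball z ρ) := by ring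

/-- The ball `B(z, D - r)` is disjoint from `B(x, r)` and `2 ^ m` times it covers `B(x, r)`. -/
lemma one_add_mul_measure_ball_le (hd : DoublingOn ν C) (hC : 0 < C) (m : ℕ) {x z r R : ℝ}
    (hz : z ∈ mSupp ν) (hr : r < dist z x) (hcover : r + dist z x ≤ 2 ^ m * (dist z x - r))
    (hR : (dist z x - r) + dist z x ≤ R) :
    ENNReal.ofReal (1 + C ^ (-(m : ℤ))) * ν (ball x r) ≤ ν (ball x R) := by
  set c := ENNReal.ofReal C
  have hc : c ≠ 0 := ENNReal.ofReal_ne_zero_iff.2 hC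
  have hsmall : c⁻¹ ^ m * ν (ball x r) ≤ ν (ball z (dist z x - r)) := by
    calc c⁻¹ ^ m * ν (ball x r)
        ≤ c⁻¹ ^ m * (c ^ m * ν (ball z (dist z x - r))) := by
          gcongr
          exact (measure_mono (ball_subset_ball' (dist_comm x z ▸ hcover))).trans
            (hd.measure_ball_two_pow_mul_le hz (by linarith) m)
      _ = ν (ball z (dist z x - r)) := by
          rw [← mul_assoc, ← mul_pow, ENNReal.inv_mul_cancel hc ENNReal.ofReal_ne_top, one_pow,
            one_mul]
  have hcoeff : ENNReal.ofReal (1 + C ^ (-(m : ℤ))) = 1 + c⁻¹ ^ m := by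
    rw [ENNReal.ofReal_add zero_le_one (by positivity), ENNReal.ofReal_one, zpow_neg,
      zpow_natCast, ← inv_pow, ENNReal.ofReal_pow (by positivity), ENNReal.ofReal_inv_of_pos hC]
  calc ENNReal.ofReal (1 + C ^ (-(m : ℤ))) * ν (ball x r)
      ≤ ν (ball x r) + ν (ball z (dist z x - r)) := by
        rw [hcoeff, add_mul, one_mul]; gcongr
    _ = ν (ball x r ∪ ball z (dist z x - r)) :=
        (measure_union (ball_disjoint_ball (by rw [dist_comm]; linarith)) measurableSet_ball).symm
    _ ≤ ν (ball x R) :=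
        measure_mono (union_subset (ball_subset_ball (by linarith)) (ball_subset_ball' hR))

end DoublingOn

/-- Lemma 4.5: if ν ∈ 𝒫(ℝ) is doubling with constant C on its support
and supp ν is uniformly perfect with constant K, then ν is (N,γ)-uniformly perfect with
N = 2(2K+1)+1 > 1 and γ = log₂(1 + C^{−M}) > 0, where M = ⌈log₂((2K+1)+1)⌉. -/
theorem doubling_to_unif_perf (ν : Measure ℝ) (hν : IsCptProb ν) (K C : ℝ) (hK : 1 < K)
    (hd : DoublingOn ν C) (hup : UnifPerfSet (mSupp ν) K) :
    1 < 2 * (2 * K + 1) + 1 ∧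
    0 < Real.logb 2 (1 + C ^ (-(⌈Real.logb 2 ((2 * K + 1) + 1)⌉ : ℤ))) ∧
    UnifPerfMeas ν (2 * (2 * K + 1) + 1)
      (Real.logb 2 (1 + C ^ (-(⌈Real.logb 2 ((2 * K + 1) + 1)⌉ : ℤ)))) := by
  have : IsProbabilityMeasure ν := hν.1
  have hC : 0 < C := hd.pos mSupp_nonempty
  set m := ⌈Real.logb 2 ((2 * K + 1) + 1)⌉₊
  have hm : ⌈Real.logb 2 ((2 * K + 1) + 1)⌉ = (m : ℤ) :=
    (Int.natCast_ceil_eq_ceil (Real.logb_nonneg one_lt_two (by linarith))).symm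
  have hcoeff : 1 < 1 + C ^ (-(m : ℤ)) := by linarith [zpow_pos hC (-(m : ℤ))]
  rw [hm]
  refine ⟨by linarith, Real.logb_pos one_lt_two hcoeff, fun x r _ hfar => ?_⟩
  rw [Real.rpow_logb two_pos (by norm_num) (by linarith)]
  obtain h0 | h0 := eq_or_ne (ν (ball x r)) 0
  · simp [h0]
  obtain ⟨y, hyx, hy⟩ := exists_mem_mSupp_of_measure_ne_zero h0
  obtain ⟨z, hz, hzx, hcover, hR⟩ := hup.exists_mem_far_from_ball hK hy (mem_ball.1 hyx) hfar
  refine hd.one_add_mul_measure_ball_le hC m hz hzx (hcover.trans ?_) hR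
  exact mul_le_mul_of_nonneg_right (le_two_pow_natCeil_logb (by linarith)) (by linarith)
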